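/- arXiv:1605.01480 — 4 statements merged into one kernel-verified Lean document; each statement's English description precedes it below -/
import Mathlib

section
/- Name substitution preserves well-formedness: if a generic signature name gn is well-formed in an SCE sce, every type-variable occurrence of gn belongs to the sequence V̄ of distinct type variables, and TN̄ is a sequence of ground signature names each well-formed in sce with #TN̄ = #V̄, then {V̄ ↦ TN̄}gn is a ground signature name that is well-formed in sce. -/
/-- Type names: either a type variable (from `X`) or a generic signature name,
i.e. a signature constructor name (from `N`) applied to a list of type names. -/
inductive TName (N X : Type) : Type
  | var : X → TName N X
  | gen : N → List (TName N X) → TName N X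

/-- Occurrence of the type variable `y` in a type name. -/
inductive Occurs {N X : Type} (y : X) : TName N X → Prop
  | var : Occurs y (TName.var y)
  | arg {nm : N} {args : List (TName N X)} {t : TName N X} :
      t ∈ args → Occurs y t → Occurs y (TName.gen nm args)

/-- Ground signature names: generic signature names containing no type variables. -/
inductive IsGround {N X : Type} : TName N X → Prop
  | gen {nm : N} {args : List (TName N X)} :
      (∀ t ∈ args, IsGround t) → IsGround (TName.gen nm args)

/-- Occurrence of the signature constructor name `n` (as the head of some
generic signature name) inside a type name. -/
inductive NameOccurs {N X : Type} (n : N) : TName N X → Prop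
  | head {args : List (TName N X)} : NameOccurs n (TName.gen n args)
  | arg {nm : N} {args : List (TName N X)} {t : TName N X} :
      t ∈ args → NameOccurs n t → NameOccurs n (TName.gen nm args)

/-- The outermost name (head) of a type name, if any. -/
def TName.head? {N X : Type} : TName N X → Option N
  | .var _ => none
  | .gen nm _ => some nm

/-- Name substitution `{V̄ ↦ TN̄}`: a type variable in `V` is mapped to the
element of `TN` at the corresponding position, other variables are left
unchanged, and substitution acts homomorphically on generic signature names. -/
def substT {N X : Type} [DecidableEq X] (V : List X) (TN : List (TName N X)) :
    TName N X → TName N X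
  | .var y =>
      match (V.zip TN).lookup y with
      | some t => t
      | none => .var y
  | .gen nm args => .gen nm (args.attach.map fun t => substT V TN t.1)
decreasing_by
  simp_wf
  have := List.sizeOf_lt_of_mem t.2
  omega

/-- A signature constructor: a name, a list of (distinct) type variables,
supersignatures, field signatures and method signatures. -/
structure SigCon (N X L : Type) where
  name : N
  tvars : List X
  supers : List (TName N X)
  fields : List (L × TName N X)
  methods : List (L × List (TName N X) × TName N X)

/-- A signature constructor environment: a (finite) map from names to
signature constructors. -/
abbrev SCE (N X L : Type) := N → Option (SigCon N X L)

/-- Well-formedness of a type name in an SCE: each signature constructor name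
used is bound in the environment and applied to the declared number of type
arguments, recursively. -/
inductive WFT {N X L : Type} (sce : SCE N X L) : TName N X → Prop
  | var (y : X) : WFT sce (TName.var y)
  | gen {nm : N} {args : List (TName N X)} (sc : SigCon N X L) :
      sce nm = some sc → args.length = sc.tvars.length →
      (∀ t ∈ args, WFT sce t) → WFT sce (TName.gen nm args)

/-- The type variable `y` occurs somewhere in the signature constructor `sc`. -/
def OccursInSC {N X L : Type} (y : X) (sc : SigCon N X L) : Prop :=
  (∃ s ∈ sc.supers, Occurs y s) ∨ (∃ f ∈ sc.fields, Occurs y f.2) ∨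
    (∃ m ∈ sc.methods, (∃ a ∈ m.2.1, Occurs y a) ∨ Occurs y m.2.2)

/-- The signature constructor name `n` is referenced somewhere inside `sc`. -/
def NameInSC {N X L : Type} (n : N) (sc : SigCon N X L) : Prop :=
  (∃ s ∈ sc.supers, NameOccurs n s) ∨ (∃ f ∈ sc.fields, NameOccurs n f.2) ∨
    (∃ m ∈ sc.methods, (∃ a ∈ m.2.1, NameOccurs n a) ∨ NameOccurs n m.2.2)

/-- All type names occurring in the components of `sc` are well-formed in `sce`. -/
def WFSC {N X L : Type} (sce : SCE N X L) (sc : SigCon N X L) : Prop :=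
  (∀ s ∈ sc.supers, WFT sce s) ∧ (∀ f ∈ sc.fields, WFT sce f.2) ∧
    (∀ m ∈ sc.methods, (∀ a ∈ m.2.1, WFT sce a) ∧ WFT sce m.2.2)

/-- The "direct supersignature" relation on names induced by an SCE:
`SuperRel sce n m` iff `m` is the head of one of the supersignatures of the
constructor bound to `n`. -/
def SuperRel {N X L : Type} (sce : SCE N X L) (n m : N) : Prop :=
  ∃ sc, sce n = some sc ∧ ∃ s ∈ sc.supers, s.head? = some m

/-- Every member (field or method) a constructor shares (same label) with an
instantiation of one of its supersignature constructors has exactly the same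
signature as in that instantiation. -/
def MemberMatch {N X L : Type} [DecidableEq X] (sce : SCE N X L) : Prop :=
  ∀ n sc, sce n = some sc →
    ∀ (snm : N) (sargs : List (TName N X)), TName.gen snm sargs ∈ sc.supers →
      ∀ ssc, sce snm = some ssc →
        (∀ (l : L) (t t' : TName N X), (l, t) ∈ sc.fields → (l, t') ∈ ssc.fields →
          t = substT ssc.tvars sargs t') ∧
        (∀ (l : L) (as_ : List (TName N X)) (r : TName N X)
            (as' : List (TName N X)) (r' : TName N X),
          (l, as_, r) ∈ sc.methods → (l, as', r') ∈ ssc.methods →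
          as_ = as'.map (substT ssc.tvars sargs) ∧ r = substT ssc.tvars sargs r')

/-- Well-formedness of a signature constructor environment. -/
structure WFSCE {N X L : Type} [DecidableEq X] (sce : SCE N X L) : Prop where
  finite : Set.Finite {n | (sce n).isSome}
  namesMatch : ∀ n sc, sce n = some sc → sc.name = n
  tvarsNodup : ∀ n sc, sce n = some sc → sc.tvars.Nodup
  refsClosed : ∀ n sc, sce n = some sc → ∀ m, NameInSC m sc → (sce m).isSome
  wfNames : ∀ n sc, sce n = some sc → WFSC sce sc
  tvarsDecl : ∀ n sc, sce n = some sc → ∀ y, OccursInSC y sc → y ∈ sc.tvars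
  noNakedSuper : ∀ n sc, sce n = some sc → ∀ s ∈ sc.supers, ∀ y : X, s ≠ TName.var y
  acyclic : ∀ n, ¬ Relation.TransGen (SuperRel sce) n n
  memberMatch : MemberMatch sce

/-- `s` is a direct ground supersignature name of `g` in `sce`. -/
def DirectSuper {N X L : Type} [DecidableEq X] (sce : SCE N X L)
    (g s : TName N X) : Prop :=
  ∃ (nm : N) (args : List (TName N X)) (sc : SigCon N X L),
    g = TName.gen nm args ∧ sce nm = some sc ∧
      ∃ t ∈ sc.supers, s = substT sc.tvars args t

/-- `gss sce g`: the set of all ground supersignature names of `g`, obtained by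
transitively taking direct ground supersignature names. -/
def gss {N X L : Type} [DecidableEq X] (sce : SCE N X L) (g : TName N X) :
    Set (TName N X) :=
  {s | Relation.TransGen (DirectSuper sce) g s}

/-- `SCEExt sce' sce`: the environment `sce'` extends `sce` (as finite maps). -/
def SCEExt {N X L : Type} (sce' sce : SCE N X L) : Prop :=
  ∀ n sc, sce n = some sc → sce' n = some sc

/-- Subsigning of generic object signatures: `Subsign gos2 gos1` (gos2 ⊴ gos1). -/
def Subsign {N X L : Type} [DecidableEq X]
    (gos2 gos1 : TName N X × SCE N X L) : Prop :=
  SCEExt gos2.2 gos1.2 ∧ (gos2.1 = gos1.1 ∨ gos1.1 ∈ gss gos2.2 gos2.1)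

/-- A well-formed generic object signature: a ground signature name
well-formed in a well-formed SCE. -/
def WFGOS {N X L : Type} [DecidableEq X] (gos : TName N X × SCE N X L) : Prop :=
  WFSCE gos.2 ∧ WFT gos.2 gos.1 ∧ IsGround gos.1

/-- A (candidate) ground signature: a quadruple of a name, supersignature
names, field signatures and method signatures (type-name components). -/
structure GSig (N X L : Type) where
  name : TName N X
  supers : List (TName N X)
  fields : List (L × TName N X)
  methods : List (L × List (TName N X) × TName N X)

/-- `gs` is a ground signature: all its components are ground signature names. -/
def GSig.IsGroundSig {N X L : Type} (gs : GSig N X L) : Prop :=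
  IsGround gs.name ∧ (∀ s ∈ gs.supers, IsGround s) ∧
    (∀ f ∈ gs.fields, IsGround f.2) ∧
    (∀ m ∈ gs.methods, (∀ a ∈ m.2.1, IsGround a) ∧ IsGround m.2.2)

/-- `GenToGnd`: instantiating the signature constructor `sc` with the type
arguments `args`, taking `(nm, args)` as the name of the result. -/
def genToGnd {N X L : Type} [DecidableEq X] (nm : N) (args : List (TName N X))
    (sc : SigCon N X L) : GSig N X L where
  name := TName.gen nm args
  supers := sc.supers.map (substT sc.tvars args)
  fields := sc.fields.map fun f => (f.1, substT sc.tvars args f.2)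
  methods := sc.methods.map fun m =>
    (m.1, m.2.1.map (substT sc.tvars args), substT sc.tvars args m.2.2)

/-- The inductively defined set `GGN = N × GGN*` of ground signature names. -/
inductive GGN (N : Type) : Type
  | node : N → List (GGN N) → GGN N

/-- The canonical interpretation of a ground signature name as a generic
signature name. -/
def GGN.toTName {N X : Type} : GGN N → TName N X
  | .node nm args => TName.gen nm (args.attach.map fun a => a.1.toTName)
decreasing_by
  simp_wf
  have := List.sizeOf_lt_of_mem a.2
  omega

/-- The outermost name of a ground signature name (its erasure). -/
def GGN.headName {N : Type} : GGN N → N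
  | .node nm _ => nm

/-- A (non-generic) NOOP signature. -/
structure NSig (N L : Type) where
  name : N
  supers : List N
  fields : List (L × N)
  methods : List (L × List N × N)

/-- A NOOP signature environment. -/
abbrev NEnv (N L : Type) := N → Option (NSig N L)

/-- The name `m` is referenced inside the NOOP signature `s`. -/
def NameInNSig {N L : Type} (m : N) (s : NSig N L) : Prop :=
  m ∈ s.supers ∨ (∃ f ∈ s.fields, f.2 = m) ∨
    (∃ mm ∈ s.methods, m ∈ mm.2.1 ∨ mm.2.2 = m)

/-- The direct supersignature relation on names induced by a NOOP environment. -/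
def NSuperRel {N L : Type} (env : NEnv N L) (n m : N) : Prop :=
  ∃ s, env n = some s ∧ m ∈ s.supers

/-- Well-formedness of a NOOP signature environment. -/
structure WFNEnv {N L : Type} (env : NEnv N L) : Prop where
  finite : Set.Finite {n | (env n).isSome}
  namesMatch : ∀ n s, env n = some s → s.name = n
  refsClosed : ∀ n s, env n = some s → ∀ m, NameInNSig m s → (env m).isSome
  acyclic : ∀ n, ¬ Relation.TransGen (NSuperRel env) n n
  memberMatch : ∀ n s, env n = some s → ∀ m ∈ s.supers, ∀ ss, env m = some ss →
    (∀ (l : L) (t t' : N), (l, t) ∈ s.fields → (l, t') ∈ ss.fields → t = t') ∧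
    (∀ (l : L) (as_ : List N) (r : N) (as' : List N) (r' : N),
      (l, as_, r) ∈ s.methods → (l, as', r') ∈ ss.methods → as_ = as' ∧ r = r')

/-- Erasure of a type name: a naked type variable erases to `Object`, a generic
signature name erases to its outermost name. -/
def eraseT {N X : Type} (Object : N) : TName N X → N
  | .var _ => Object
  | .gen nm _ => nm

/-- Erasure of a signature constructor to a NOOP signature. -/
def eraseSC {N X L : Type} (Object : N) (sc : SigCon N X L) : NSig N L where
  name := sc.name
  supers := sc.supers.map (eraseT Object)
  fields := sc.fields.map fun f => (f.1, eraseT Object f.2)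
  methods := sc.methods.map fun m =>
    (m.1, m.2.1.map (eraseT Object), eraseT Object m.2.2)

/-- Erasure of a signature constructor environment. -/
def eraseSCE {N X L : Type} (Object : N) (sce : SCE N X L) : NEnv N L :=
  fun n => (sce n).map (eraseSC Object)

theorem List.mem_of_lookup_zip_eq_some {α β : Type*} [DecidableEq α] {l₁ : List α}
    {l₂ : List β} {a : α} {b : β} (h : (l₁.zip l₂).lookup a = some b) : b ∈ l₂ := by
  obtain ⟨_, _, hzip, -⟩ := List.lookup_eq_some_iff.mp h
  exact (List.of_mem_zip (hzip ▸ List.mem_append_right _ List.mem_cons_self)).2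

theorem List.isSome_lookup_zip {α β : Type*} [DecidableEq α] {l₁ : List α} {l₂ : List β}
    {a : α} (ha : a ∈ l₁) (hlen : l₁.length ≤ l₂.length) :
    ((l₁.zip l₂).lookup a).isSome := by
  rw [← List.map_fst_zip hlen, List.mem_map] at ha
  obtain ⟨p, hp, rfl⟩ := ha
  exact List.lookup_isSome_iff.mpr ⟨p, hp, beq_self_eq_true _⟩

section Subst

variable {N X : Type} [DecidableEq X] {V : List X} {TN : List (TName N X)}

theorem substT_gen (nm : N) (args : List (TName N X)) :
    substT V TN (.gen nm args) = .gen nm (args.map (substT V TN)) := by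
  rw [substT, List.map_attach_eq_pmap, List.pmap_eq_map]

theorem substT_var_eq_or_mem (y : X) :
    substT V TN (.var y) = .var y ∨ substT V TN (.var y) ∈ TN := by
  rw [substT]
  split
  · exact .inr (List.mem_of_lookup_zip_eq_some ‹_›)
  · exact .inl rfl

theorem substT_var_mem {y : X} (hy : y ∈ V) (hlen : V.length ≤ TN.length) :
    substT V TN (.var y) ∈ TN := by
  obtain ⟨t, ht⟩ := Option.isSome_iff_exists.mp (List.isSome_lookup_zip hy hlen)
  rw [substT, ht]
  exact List.mem_of_lookup_zip_eq_some ht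

theorem WFT.substT {L : Type} {sce : SCE N X L} (hTN : ∀ t ∈ TN, WFT sce t) {u : TName N X}
    (hu : WFT sce u) : WFT sce (substT V TN u) := by
  induction hu with
  | var y =>
    rcases substT_var_eq_or_mem (V := V) (TN := TN) y with h | h
    · rw [h]
      exact .var y
    · exact hTN _ h
  | gen sc hsc hlen _ ih =>
    rw [substT_gen]
    exact .gen sc hsc (by rwa [List.length_map]) (by simpa using ih)

theorem isGround_substT (hTN : ∀ t ∈ TN, IsGround t) (hlen : V.length ≤ TN.length) :
    ∀ u : TName N X, (∀ y, Occurs y u → y ∈ V) → IsGround (substT V TN u)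
  | .var y, hocc => hTN _ (substT_var_mem (hocc y .var) hlen)
  | .gen nm args, hocc => by
    rw [substT_gen]
    refine .gen fun t ht => ?_
    obtain ⟨a, ha, rfl⟩ := List.mem_map.mp ht
    exact isGround_substT hTN hlen a fun y hy => hocc y (.arg ha hy)

end Subst

theorem subst_preserves_wf_general {N X L : Type} [DecidableEq X] (sce : SCE N X L)
    (nm : N) (args : List (TName N X)) (V : List X) (TN : List (TName N X))
    (hwf : WFT sce (TName.gen nm args))
    (hocc : ∀ y : X, Occurs y (TName.gen nm args) → y ∈ V)
    (hlen : TN.length = V.length)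
    (hTN : ∀ t ∈ TN, IsGround t ∧ WFT sce t) :
    IsGround (substT V TN (TName.gen nm args)) ∧
      WFT sce (substT V TN (TName.gen nm args)) :=
  ⟨isGround_substT (fun t ht => (hTN t ht).1) hlen.ge _ hocc,
    hwf.substT fun t ht => (hTN t ht).2⟩

/-- Name substitution preserves well-formedness: substituting the
type variables of a well-formed generic signature name by ground signature
names well-formed in `sce` yields a ground signature name well-formed in
`sce`. -/
theorem subst_preserves_wf {N X L : Type} [DecidableEq X] (sce : SCE N X L)
    (nm : N) (args : List (TName N X)) (V : List X) (TN : List (TName N X))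
    (hwf : WFT sce (TName.gen nm args))
    (hocc : ∀ y : X, Occurs y (TName.gen nm args) → y ∈ V)
    (hnd : V.Nodup) (hlen : TN.length = V.length)
    (hTN : ∀ t ∈ TN, IsGround t ∧ WFT sce t) :
    IsGround (substT V TN (TName.gen nm args)) ∧
      WFT sce (substT V TN (TName.gen nm args)) :=
  subst_preserves_wf_general sce nm args V TN hwf hocc hlen hTN
end

section
/- Let sce be a finite SCE in which every generic signature name occurring in any constructor is well-formed in sce, every type variable occurring in a constructor is declared in its type-variables component, no naked type variable occurs among the supersignatures of any constructor, and the relation on dom(sce) relating each name nm to the outermost names (heads) of the supersignatures of sce(nm) has no cycles. Then for every ground signature name ggnm well-formed in sce, the set gss(sce, ggnm) of all ground supersignature names of ggnm, obtained by transitively taking direct ground supersignature names, is a finite set. -/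
/-! Since no supersignature is a naked type variable, the heads along a chain of direct
supersignature names form a chain of `SuperRel sce`. That relation is acyclic with its sources in
the finite domain of `sce`, so it has no infinite chains, and hence neither has the
direct-supersignature relation. The latter is finitely branching, so by König's lemma only
finitely many names are reachable from `ggnm`. -/

open Relation

section Relation

variable {α : Type*} {r : α → α → Prop}

/-- An infinite `r`-chain stays in the finite set of sources, so it revisits a point and closes a
cycle. -/
theorem wellFounded_flip_of_finite_of_acyclic {s : Set α} (hs : s.Finite)
    (hsrc : ∀ a b, r a b → a ∈ s) (hac : ∀ a, ¬ TransGen r a a) : WellFounded (flip r) := by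
  refine wellFounded_iff_isEmpty_descending_chain.mpr ⟨fun ⟨f, hf⟩ => ?_⟩
  obtain ⟨i, j, hij, hfij⟩ :=
    Set.Finite.exists_lt_map_eq_of_forall_mem (fun n => hsrc _ _ (hf n)) hs
  have hchain : TransGen r (f i) (f j) :=
    Nat.rel_of_forall_rel_succ_of_lt (TransGen r) (fun n => TransGen.single (hf n)) hij
  exact hac (f i) (hfij ▸ hchain)

theorem setOf_transGen_eq_biUnion (a : α) :
    {c | TransGen r a c} = ⋃ b ∈ {b | r a b}, insert b {c | TransGen r b c} := by
  ext c
  rw [Set.mem_ofPred_eq, TransGen.head'_iff]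
  simp only [Set.mem_iUnion, Set.mem_insert_iff, Set.mem_ofPred_eq, exists_prop,
    reflTransGen_iff_eq_or_transGen]

theorem finite_setOf_transGen (hwf : WellFounded (flip r)) (hfin : ∀ a, {b | r a b}.Finite)
    (a : α) : {c | TransGen r a c}.Finite := by
  induction a using hwf.induction with
  | _ a ih =>
    rw [setOf_transGen_eq_biUnion]
    exact (hfin a).biUnion fun b hb => (ih b hb).insert b

end Relation

section DirectSuper

variable {N X L : Type} [DecidableEq X] {sce : SCE N X L}

theorem not_directSuper_var (y : X) (s : TName N X) : ¬ DirectSuper sce (.var y) s := by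
  rintro ⟨_, _, _, h, -⟩
  cases h

theorem directSuper_gen_iff {nm : N} {args : List (TName N X)} {sc : SigCon N X L}
    (hsc : sce nm = some sc) (s : TName N X) :
    DirectSuper sce (.gen nm args) s ↔ s ∈ sc.supers.map (substT sc.tvars args) := by
  constructor
  · rintro ⟨_, _, sc', ⟨⟩, hsc', t, ht, rfl⟩
    rw [hsc, Option.some_inj] at hsc'
    subst hsc'
    exact List.mem_map_of_mem ht
  · rw [List.mem_map]
    rintro ⟨t, ht, rfl⟩
    exact ⟨nm, args, sc, rfl, hsc, t, ht, rfl⟩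

theorem finite_setOf_directSuper (g : TName N X) : {s | DirectSuper sce g s}.Finite := by
  rcases g with y | ⟨nm, args⟩
  · simp only [not_directSuper_var, Set.ofPred_false, Set.finite_empty]
  · rcases hsc : sce nm with _ | sc
    · simp [DirectSuper, hsc]
    · simp only [directSuper_gen_iff hsc]
      exact List.finite_toSet _

theorem exists_superRel_of_directSuper
    (hnk : ∀ n sc, sce n = some sc → ∀ s ∈ sc.supers, ∀ y : X, s ≠ TName.var y)
    {nm : N} {args : List (TName N X)} {s : TName N X} (h : DirectSuper sce (.gen nm args) s) :
    ∃ snm sargs, s = .gen snm sargs ∧ SuperRel sce nm snm := by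
  obtain ⟨_, _, sc, ⟨⟩, hsc, t, ht, rfl⟩ := h
  rcases t with y | ⟨snm, targs⟩
  · exact absurd rfl (hnk nm sc hsc _ ht y)
  · exact ⟨snm, _, by rw [substT], sc, hsc, _, ht, rfl⟩

theorem acc_flip_directSuper_gen
    (hnk : ∀ n sc, sce n = some sc → ∀ s ∈ sc.supers, ∀ y : X, s ≠ TName.var y)
    {nm : N} (hacc : Acc (flip (SuperRel sce)) nm) (args : List (TName N X)) :
    Acc (flip (DirectSuper sce)) (.gen nm args) := by
  induction hacc generalizing args with
  | intro nm _ ih =>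
    refine ⟨_, fun s hs => ?_⟩
    obtain ⟨snm, sargs, rfl, hrel⟩ := exists_superRel_of_directSuper hnk hs
    exact ih snm hrel sargs

theorem wellFounded_flip_directSuper
    (hnk : ∀ n sc, sce n = some sc → ∀ s ∈ sc.supers, ∀ y : X, s ≠ TName.var y)
    (hwf : WellFounded (flip (SuperRel sce))) : WellFounded (flip (DirectSuper sce)) := by
  refine ⟨fun g => ?_⟩
  rcases g with y | ⟨nm, args⟩
  · exact ⟨_, fun s hs => absurd hs (not_directSuper_var y s)⟩
  · exact acc_flip_directSuper_gen hnk (hwf.apply nm) args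

end DirectSuper

theorem gss_finite_general {N X L : Type} [DecidableEq X] (sce : SCE N X L)
    (hfin : Set.Finite {n | (sce n).isSome})
    (hnk : ∀ n sc, sce n = some sc → ∀ s ∈ sc.supers, ∀ y : X, s ≠ TName.var y)
    (hac : ∀ n, ¬ Relation.TransGen (SuperRel sce) n n)
    (ggnm : TName N X) :
    (gss sce ggnm).Finite := by
  have hsrc : ∀ n m, SuperRel sce n m → n ∈ {n | (sce n).isSome} := by
    rintro n m ⟨sc, hsc, -⟩
    simp [hsc]
  have hwf : WellFounded (flip (DirectSuper sce)) :=
    wellFounded_flip_directSuper hnk (wellFounded_flip_of_finite_of_acyclic hfin hsrc hac)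
  exact finite_setOf_transGen hwf finite_setOf_directSuper ggnm

/-- In a finite SCE in which all occurring generic signature
names are well-formed, all occurring type variables are declared, no naked
type variable occurs among supersignatures, and the supersignature relation on
names has no cycles, the set `gss(sce, ggnm)` of all ground supersignature
names of a well-formed ground signature name `ggnm` is finite. -/
theorem gss_finite {N X L : Type} [DecidableEq X] (sce : SCE N X L)
    (hfin : Set.Finite {n | (sce n).isSome})
    (hwfn : ∀ n sc, sce n = some sc → WFSC sce sc)
    (htv : ∀ n sc, sce n = some sc → ∀ y : X, OccursInSC y sc → y ∈ sc.tvars)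
    (hnk : ∀ n sc, sce n = some sc → ∀ s ∈ sc.supers, ∀ y : X, s ≠ TName.var y)
    (hac : ∀ n, ¬ Relation.TransGen (SuperRel sce) n n)
    (ggnm : TName N X) (hgr : IsGround ggnm) (hwf : WFT sce ggnm) :
    (gss sce ggnm).Finite :=
  gss_finite_general sce hfin hnk hac ggnm
end

section
/- Subsigning is antisymmetric over a fixed well-formed environment: if sce is a well-formed SCE (in particular, the relation on dom(sce) relating each name to the heads of the supersignatures of its constructor has no cycles), and ggnm1, ggnm2 are ground signature names well-formed in sce such that (ggnm1, sce) ⊴ (ggnm2, sce) and (ggnm2, sce) ⊴ (ggnm1, sce), then ggnm1 = ggnm2. -/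
lemma transGen_first {α : Type*} {r : α → α → Prop} {a b : α}
    (h : Relation.TransGen r a b) : ∃ c, r a c := by
  induction h with
  | single h => exact ⟨_, h⟩
  | tail _ _ ih => exact ih

lemma directSuper_step {N X L : Type} [DecidableEq X] {sce : SCE N X L}
    (hwfe : WFSCE sce) {g s : TName N X} (h : DirectSuper sce g s) :
    ∃ n m, g.head? = some n ∧ s.head? = some m ∧ SuperRel sce n m := by
  obtain ⟨nm, args, sc, rfl, hsce, t, ht, rfl⟩ := h
  cases t with
  | var y => exact absurd rfl (hwfe.noNakedSuper nm sc hsce _ ht y)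
  | gen m targs =>
    refine ⟨nm, m, rfl, ?_, sc, hsce, TName.gen m targs, ht, rfl⟩
    simp [substT, TName.head?]

lemma transGen_heads {N X L : Type} [DecidableEq X] {sce : SCE N X L}
    (hwfe : WFSCE sce) {g s : TName N X}
    (h : Relation.TransGen (DirectSuper sce) g s) :
    ∀ n m, g.head? = some n → s.head? = some m →
      Relation.TransGen (SuperRel sce) n m := by
  induction h with
  | single hds =>
    intro n m hn hm
    obtain ⟨n', m', hn', hm', hrel⟩ := directSuper_step hwfe hds
    rw [hn'] at hn; rw [hm'] at hm
    cases hn; cases hm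
    exact Relation.TransGen.single hrel
  | tail _ hds ih =>
    intro n m hn hm
    obtain ⟨n', m', hn', hm', hrel⟩ := directSuper_step hwfe hds
    rw [hm'] at hm; cases hm
    exact (ih n n' hn hn').tail hrel

/-- Subsigning is antisymmetric over a fixed well-formed
environment. -/
theorem subsign_antisymm {N X L : Type} [DecidableEq X] (sce : SCE N X L)
    (hwfe : WFSCE sce) (ggnm1 ggnm2 : TName N X)
    (hgr1 : IsGround ggnm1) (hgr2 : IsGround ggnm2)
    (hwf1 : WFT sce ggnm1) (hwf2 : WFT sce ggnm2)
    (h12 : Subsign (ggnm1, sce) (ggnm2, sce))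
    (h21 : Subsign (ggnm2, sce) (ggnm1, sce)) :
    ggnm1 = ggnm2 := by
  rcases h12.2 with h | h12'
  · exact h
  rcases h21.2 with h | h21'
  · exact h.symm
  exfalso
  have h12'' : Relation.TransGen (DirectSuper sce) ggnm1 ggnm2 := h12'
  have h21'' : Relation.TransGen (DirectSuper sce) ggnm2 ggnm1 := h21'
  have hloop : Relation.TransGen (DirectSuper sce) ggnm1 ggnm1 :=
    h12''.trans h21''
  have hstep : ∃ s, DirectSuper sce ggnm1 s := transGen_first hloop
  obtain ⟨s, hs⟩ := hstep
  obtain ⟨n, m, hn, _, _⟩ := directSuper_step hwfe hs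
  exact hwfe.acyclic n (transGen_heads hwfe hloop n n hn hn)
end

section
/- The wildcard subtyping relation admits an infinite ascending chain: there exists a sequence (Tn) of pairwise distinct types with T0 = C such that Tn ≤ T(n+1) for every n (for instance C, Enum⟨C⟩, Enum⟨? extends C⟩, Enum⟨? extends Enum⟨C⟩⟩, Enum⟨? extends Enum⟨? extends C⟩⟩, …); in particular, the type C has infinitely many pairwise distinct supertypes. -/
/-- Types generated by `T ::= C | Enum⟨T⟩ | Enum⟨? extends T⟩`,
where `C` models a class declared by `class C extends Enum<C>`. -/
inductive JTy : Type
  | C : JTy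
  | Enum : JTy → JTy
  | EnumExt : JTy → JTy

/-- The smallest reflexive and transitive relation such that `C ≤ Enum⟨C⟩`,
`Enum⟨T⟩ ≤ Enum⟨? extends T⟩`, and `Enum⟨? extends S⟩ ≤ Enum⟨? extends T⟩`
whenever `S ≤ T`. -/
inductive JSub : JTy → JTy → Prop
  | refl (t : JTy) : JSub t t
  | trans {a b c : JTy} : JSub a b → JSub b c → JSub a c
  | base : JSub JTy.C (JTy.Enum JTy.C)
  | wrap (t : JTy) : JSub (JTy.Enum t) (JTy.EnumExt t)
  | cov {s t : JTy} : JSub s t → JSub (JTy.EnumExt s) (JTy.EnumExt t)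

/-- The chain `C, Enum C, EnumExt C, EnumExt (Enum C), EnumExt (EnumExt C), …` -/
def chainT : ℕ → JTy
  | 0 => JTy.C
  | 1 => JTy.Enum JTy.C
  | n + 2 => JTy.EnumExt (chainT n)

/-- An injective encoding of types into naturals. -/
def code : JTy → ℕ
  | JTy.C => 0
  | JTy.Enum t => 2 * code t + 1
  | JTy.EnumExt t => 2 * code t + 2

lemma code_chainT_lt : ∀ n, code (chainT n) < code (chainT (n + 1))
  | 0 => by simp [chainT, code]
  | 1 => by simp [chainT, code]
  | n + 2 => by
      have := code_chainT_lt n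
      simpa [chainT, code] using this

lemma chainT_step : ∀ n, JSub (chainT n) (chainT (n + 1))
  | 0 => JSub.base
  | 1 => by simpa [chainT] using JSub.wrap JTy.C
  | n + 2 => JSub.cov (chainT_step n)

lemma chainT_sub : ∀ n, JSub JTy.C (chainT n)
  | 0 => JSub.refl _
  | n + 1 => JSub.trans (chainT_sub n) (chainT_step n)

lemma chainT_inj : Function.Injective chainT := by
  have mono : StrictMono (fun n => code (chainT n)) :=
    strictMono_nat_of_lt_succ code_chainT_lt
  intro a b h
  exact mono.injective (by simp [h])

/-- The wildcard subtyping relation admits an infinite strictly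
ascending chain starting at `C`: there is a sequence of pairwise distinct
types `T` with `T 0 = C` and `T n ≤ T (n+1)` for all `n`; in particular `C`
has infinitely many pairwise distinct supertypes. -/
theorem wildcard_infinite_ascending_chain :
    (∃ T : ℕ → JTy, T 0 = JTy.C ∧ (∀ n, JSub (T n) (T (n + 1))) ∧
        Function.Injective T) ∧
      {t : JTy | JSub JTy.C t}.Infinite := by
  refine ⟨⟨chainT, rfl, chainT_step, chainT_inj⟩, ?_⟩
  exact Set.infinite_of_injective_forall_mem chainT_inj chainT_sub
end
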